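/- Let G be a finite simple graph and V₁, V₂ ⊆ V(G) with V₁ ∪ V₂ = V(G) and V₁ ∩ V₂ = {v, w} where {v,w} ∈ E(G), such that every edge of G has both endpoints in V₁ or both in V₂ (i.e., G is the gluing of the induced subgraphs G₁ on V₁ and G₂ on V₂ along the edge {v,w}, which belongs to both). Then an edge weighting r ∈ [0,1]^{E(G)} lies in the classical polytope C_G if and only if its restriction to E(G₁) lies in C_{G₁} and its restriction to E(G₂) lies in C_{G₂}. -/

import Mathlib

open SimpleGraph
open scoped Classical

variable {V : Type*}

/-- The element of `G.edgeSet` corresponding to an adjacent pair of vertices. -/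
def edgeMk (G : SimpleGraph V) {v w : V} (h : G.Adj v w) : G.edgeSet :=
  ⟨s(v, w), (SimpleGraph.mem_edgeSet G).mpr h⟩

/-- `r` is a realizable edge `{0,1}`-labelling of `G`, viewed as a real vector:
it is the equality labelling of some vertex labelling. -/
def RealizablePoint (G : SimpleGraph V) (r : G.edgeSet → ℝ) : Prop :=
  ∃ (Λ : Type) (lam : V → Λ), ∀ v w (h : G.Adj v w),
    r (edgeMk G h) = if lam v = lam w then 1 else 0

/-- The classical polytope `C_G`: the convex hull of the realizable edge `{0,1}`-labellings. -/
def classicalPolytope (G : SimpleGraph V) : Set (G.edgeSet → ℝ) :=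
  convexHull ℝ {r | RealizablePoint G r}

/-- The (induced) subgraph of `G` on a set `s` of vertices, kept on the same vertex type:
its edges are exactly the edges of `G` with both endpoints in `s`. -/
def restrictTo (G : SimpleGraph V) (s : Set V) : SimpleGraph V where
  Adj v w := G.Adj v w ∧ v ∈ s ∧ w ∈ s
  symm := ⟨fun v w (h : G.Adj v w ∧ v ∈ s ∧ w ∈ s) =>
    (show G.Adj w v ∧ w ∈ s ∧ v ∈ s from ⟨h.1.symm, h.2.2, h.2.1⟩)⟩
  loopless := ⟨fun v (h : G.Adj v v ∧ v ∈ s ∧ v ∈ s) => G.loopless.irrefl v h.1⟩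

theorem restrictTo_le (G : SimpleGraph V) (s : Set V) : restrictTo G s ≤ G := by
  intro v w h; exact (show G.Adj v w ∧ v ∈ s ∧ w ∈ s from h).1

/-- Restriction of an edge weighting along a subgraph inclusion. -/
def restrictWeights {G G' : SimpleGraph V} (h : G' ≤ G) (r : G.edgeSet → ℝ) :
    G'.edgeSet → ℝ :=
  fun e => r ⟨e.1, SimpleGraph.edgeSet_subset_edgeSet.mpr h e.2⟩


/-!
Let `t` be the common weight of the shared edge `vw`. A convex decomposition of `r|₁` into
realizable labellings of `G₁` has mass `t` on labellings with `v, w` in one class and `1 - t` on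
the others, and the same holds for `r|₂`. Pairing a labelling of `G₁` with one of `G₂` only when
they agree on `vw`, with weight the product of their weights normalised by the mass of their
class, writes `(r|₁, r|₂)` as a convex combination of compatible pairs. A compatible pair glues
to a realizable labelling of `G`: relabel the `G₂`-side injectively so that it agrees with the
`G₁`-side at `v` and `w`, which is consistent because both sides agree on whether `v` and `w`
share a label, and these are the only common vertices.
-/

open Finset

section Coupling

variable {ι₁ ι₂ κ : Type*} [Fintype ι₂] [DecidableEq κ]
  {w₁ : ι₁ → ℝ} {w₂ : ι₂ → ℝ} {a : ι₁ → κ} {b : ι₂ → κ}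

variable (w₁ w₂ a b) in
/-- A coupling of `w₁` and `w₂` supported on `{a = b}`, whenever `a` and `b` push `w₁` and `w₂`
forward to the same weights on `κ`. -/
noncomputable def fiberCoupling (p : ι₁ × ι₂) : ℝ :=
  if a p.1 = b p.2 then w₁ p.1 * w₂ p.2 / ∑ j with b j = b p.2, w₂ j else 0

theorem fiberCoupling_nonneg (hw₁ : ∀ i, 0 ≤ w₁ i) (hw₂ : ∀ j, 0 ≤ w₂ j) (p : ι₁ × ι₂) :
    0 ≤ fiberCoupling w₁ w₂ a b p := by
  unfold fiberCoupling
  split_ifs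
  · exact div_nonneg (mul_nonneg (hw₁ _) (hw₂ _)) (sum_nonneg fun j _ => hw₂ j)
  · exact le_rfl

theorem eq_of_fiberCoupling_ne_zero {p : ι₁ × ι₂} (hp : fiberCoupling w₁ w₂ a b p ≠ 0) :
    a p.1 = b p.2 := by
  by_contra h
  exact hp (if_neg h)

theorem le_sum_fiber {ι : Type*} [Fintype ι] {w : ι → ℝ} {a : ι → κ} (hw : ∀ i, 0 ≤ w i)
    (i : ι) : w i ≤ ∑ i' with a i' = a i, w i' :=
  single_le_sum (fun i' _ => hw i') (mem_filter.2 ⟨mem_univ i, rfl⟩)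

theorem sum_fiberCoupling_snd [Fintype ι₁] (hw₁ : ∀ i, 0 ≤ w₁ i)
    (hfib : ∀ c, ∑ i with a i = c, w₁ i = ∑ j with b j = c, w₂ j) (i : ι₁) :
    ∑ j, fiberCoupling w₁ w₂ a b (i, j) = w₁ i := by
  have hterm : ∀ j, fiberCoupling w₁ w₂ a b (i, j) =
      w₁ i / (∑ j' with b j' = a i, w₂ j') * if b j = a i then w₂ j else 0 := by
    intro j
    unfold fiberCoupling
    split_ifs with h h' h'
    · rw [h]; ring
    · exact absurd h.symm h'
    · exact absurd h'.symm h
    · ring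
  simp_rw [hterm, ← mul_sum, ← sum_filter, ← hfib]
  refine div_mul_cancel_of_imp fun h0 => le_antisymm ?_ (hw₁ i)
  exact h0 ▸ le_sum_fiber hw₁ i

theorem sum_fiberCoupling_fst [Fintype ι₁] (hw₂ : ∀ j, 0 ≤ w₂ j)
    (hfib : ∀ c, ∑ i with a i = c, w₁ i = ∑ j with b j = c, w₂ j) (j : ι₂) :
    ∑ i, fiberCoupling w₁ w₂ a b (i, j) = w₂ j := by
  have hterm : ∀ i, fiberCoupling w₁ w₂ a b (i, j) =
      w₂ j / (∑ j' with b j' = b j, w₂ j') * if a i = b j then w₁ i else 0 := by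
    intro i
    unfold fiberCoupling
    split_ifs <;> ring
  simp_rw [hterm, ← mul_sum, ← sum_filter, hfib]
  refine div_mul_cancel_of_imp fun h0 => le_antisymm ?_ (hw₂ j)
  exact h0 ▸ le_sum_fiber hw₂ j

end Coupling

theorem sum_filter_eq_of_zero_one {ι : Type*} [Fintype ι] {w a : ι → ℝ}
    (ha : ∀ i, a i = 0 ∨ a i = 1) (c : ℝ) :
    ∑ i with a i = c, w i =
      if c = 1 then ∑ i, w i * a i else if c = 0 then ∑ i, w i - ∑ i, w i * a i else 0 := by
  rw [sum_filter]
  split_ifs with h1 h0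
  · subst h1
    refine sum_congr rfl fun i _ => ?_
    rcases ha i with h | h <;> simp [h]
  · subst h0
    rw [← sum_sub_distrib]
    refine sum_congr rfl fun i _ => ?_
    rcases ha i with h | h <;> simp [h]
  · refine sum_eq_zero fun i _ => ?_
    rcases ha i with h | h <;> simp [h, Ne.symm h0, Ne.symm h1]

theorem prodMk_mem_convexHull_of_apply_eq {E₁ E₂ : Type*} [AddCommGroup E₁] [Module ℝ E₁]
    [AddCommGroup E₂] [Module ℝ E₂] {S₁ : Set E₁} {S₂ : Set E₂} {f₁ : E₁ →ₗ[ℝ] ℝ}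
    {f₂ : E₂ →ₗ[ℝ] ℝ} (hS₁ : ∀ x ∈ S₁, f₁ x = 0 ∨ f₁ x = 1)
    (hS₂ : ∀ y ∈ S₂, f₂ y = 0 ∨ f₂ y = 1) {x : E₁} {y : E₂} (hx : x ∈ convexHull ℝ S₁)
    (hy : y ∈ convexHull ℝ S₂) (hxy : f₁ x = f₂ y) :
    (x, y) ∈ convexHull ℝ {p : E₁ × E₂ | p.1 ∈ S₁ ∧ p.2 ∈ S₂ ∧ f₁ p.1 = f₂ p.2} := by
  classical
  obtain ⟨ι₁, _, w₁, z₁, hw₁, hsum₁, hz₁, rfl⟩ := mem_convexHull_iff_exists_fintype.1 hx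
  obtain ⟨ι₂, _, w₂, z₂, hw₂, hsum₂, hz₂, rfl⟩ := mem_convexHull_iff_exists_fintype.1 hy
  simp only [map_sum, map_smul, smul_eq_mul] at hxy
  have hfib : ∀ c, ∑ i with f₁ (z₁ i) = c, w₁ i = ∑ j with f₂ (z₂ j) = c, w₂ j := by
    intro c
    rw [sum_filter_eq_of_zero_one (fun i => hS₁ _ (hz₁ i)),
      sum_filter_eq_of_zero_one (fun j => hS₂ _ (hz₂ j)), hxy, hsum₁, hsum₂]
  set ν := fiberCoupling w₁ w₂ (fun i => f₁ (z₁ i)) (fun j => f₂ (z₂ j))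
  have hν : ∀ p, ν p ≠ 0 → f₁ (z₁ p.1) = f₂ (z₂ p.2) := fun p => eq_of_fiberCoupling_ne_zero
  have hcomb : ∑ p, ν p • (z₁ p.1, z₂ p.2) = (∑ i, w₁ i • z₁ i, ∑ j, w₂ j • z₂ j) := by
    ext
    · simp only [Prod.fst_sum, Prod.smul_fst]
      rw [Fintype.sum_prod_type]
      simp_rw [← sum_smul, ν, sum_fiberCoupling_snd hw₁ hfib]
    · simp only [Prod.snd_sum, Prod.smul_snd]
      rw [Fintype.sum_prod_type_right]
      simp_rw [← sum_smul, ν, sum_fiberCoupling_fst hw₂ hfib]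
  rw [← hcomb, ← sum_filter_of_ne fun p _ h => hν p (left_ne_zero_of_smul h)]
  refine (convex_convexHull ℝ _).sum_mem (fun p _ => fiberCoupling_nonneg hw₁ hw₂ p) ?_
    fun p hp => subset_convexHull ℝ _ ⟨hz₁ _, hz₂ _, (mem_filter.1 hp).2⟩
  rw [sum_filter_of_ne fun p _ => hν p, Fintype.sum_prod_type]
  simp_rw [ν, sum_fiberCoupling_snd hw₁ hfib]
  exact hsum₁

theorem RealizablePoint.restrictWeights {G G' : SimpleGraph V} (hle : G' ≤ G)
    {r : G.edgeSet → ℝ} (hr : RealizablePoint G r) :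
    RealizablePoint G' (restrictWeights hle r) := by
  obtain ⟨Λ, lam, h⟩ := hr
  exact ⟨Λ, lam, fun a b hab => h a b (hle hab)⟩

theorem restrictWeights_mem_classicalPolytope {G G' : SimpleGraph V} (hle : G' ≤ G)
    {r : G.edgeSet → ℝ} (hr : r ∈ classicalPolytope G) :
    restrictWeights hle r ∈ classicalPolytope G' := by
  let f : (G.edgeSet → ℝ) →ₗ[ℝ] (G'.edgeSet → ℝ) :=
    LinearMap.funLeft ℝ ℝ (Set.inclusion (edgeSet_subset_edgeSet.mpr hle))
  have hfr : f r ∈ convexHull ℝ (f '' {x | RealizablePoint G x}) :=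
    f.image_convexHull _ ▸ Set.mem_image_of_mem f hr
  refine convexHull_mono ?_ hfr
  rintro _ ⟨x, hx, rfl⟩
  exact hx.restrictWeights hle

theorem RealizablePoint.apply_edgeMk_eq_zero_or_one {G : SimpleGraph V} {r : G.edgeSet → ℝ}
    (hr : RealizablePoint G r) {a b : V} (hab : G.Adj a b) :
    r (edgeMk G hab) = 0 ∨ r (edgeMk G hab) = 1 := by
  obtain ⟨Λ, lam, h⟩ := hr
  rw [h a b hab]
  split_ifs
  · exact Or.inr rfl
  · exact Or.inl rfl

noncomputable def glueWeights (G₁ G₂ G : SimpleGraph V) :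
    ((G₁.edgeSet → ℝ) × (G₂.edgeSet → ℝ)) →ₗ[ℝ] (G.edgeSet → ℝ) where
  toFun p e :=
    if h₁ : e.1 ∈ G₁.edgeSet then p.1 ⟨e, h₁⟩
    else if h₂ : e.1 ∈ G₂.edgeSet then p.2 ⟨e, h₂⟩ else 0
  map_add' p q := by
    ext e
    simp only [Prod.fst_add, Prod.snd_add, Pi.add_apply]
    split_ifs <;> simp
  map_smul' c p := by
    ext e
    simp only [Prod.smul_fst, Prod.smul_snd, Pi.smul_apply, RingHom.id_apply]
    split_ifs <;> simp

section glueWeights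

variable {G₁ G₂ G : SimpleGraph V} (x : G₁.edgeSet → ℝ) (y : G₂.edgeSet → ℝ) {a b : V}
  (hab : G.Adj a b)

theorem glueWeights_apply_edgeMk_of_adj_left (h₁ : G₁.Adj a b) :
    glueWeights G₁ G₂ G (x, y) (edgeMk G hab) = x (edgeMk G₁ h₁) :=
  dif_pos ((mem_edgeSet G₁).mpr h₁)

theorem glueWeights_apply_edgeMk_of_adj_right (h₁ : ¬ G₁.Adj a b) (h₂ : G₂.Adj a b) :
    glueWeights G₁ G₂ G (x, y) (edgeMk G hab) = y (edgeMk G₂ h₂) :=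
  (dif_neg (mt (mem_edgeSet G₁).mp h₁)).trans (dif_pos ((mem_edgeSet G₂).mpr h₂))

end glueWeights

theorem glueWeights_restrictWeights {G₁ G₂ G : SimpleGraph V} (h₁ : G₁ ≤ G) (h₂ : G₂ ≤ G)
    (hcover : ∀ a b, G.Adj a b → G₁.Adj a b ∨ G₂.Adj a b) (r : G.edgeSet → ℝ) :
    glueWeights G₁ G₂ G (restrictWeights h₁ r, restrictWeights h₂ r) = r := by
  ext ⟨e, he⟩
  induction e using Sym2.ind with
  | _ a b =>
    have hab : G.Adj a b := he
    by_cases hab₁ : G₁.Adj a b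
    · exact glueWeights_apply_edgeMk_of_adj_left _ _ hab hab₁
    · exact glueWeights_apply_edgeMk_of_adj_right _ _ hab hab₁ ((hcover a b hab).resolve_left hab₁)

theorem exists_injective_sum_inl {α β : Type*} {a b : β} {a' b' : α} (h : a = b ↔ a' = b') :
    ∃ φ : β → α ⊕ β, Function.Injective φ ∧ φ a = .inl a' ∧ φ b = .inl b' := by
  classical
  refine ⟨fun c => if c = a then .inl a' else if c = b then .inl b' else .inr c, ?_, by simp, ?_⟩
  · intro c d hcd
    simp only at hcd
    split_ifs at hcd <;> simp_all
  · by_cases hba : b = a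
    · simp [hba, h.mp hba.symm]
    · simp [hba]

theorem RealizablePoint.glueWeights {G : SimpleGraph V} {V₁ V₂ : Set V} {v w : V}
    (hmeet : V₁ ∩ V₂ ⊆ {v, w})
    (hedges : ∀ x y, G.Adj x y → (x ∈ V₁ ∧ y ∈ V₁) ∨ (x ∈ V₂ ∧ y ∈ V₂))
    (h₁ : (restrictTo G V₁).Adj v w) (h₂ : (restrictTo G V₂).Adj v w)
    {x : (restrictTo G V₁).edgeSet → ℝ} {y : (restrictTo G V₂).edgeSet → ℝ}
    (hx : RealizablePoint _ x) (hy : RealizablePoint _ y)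
    (hxy : x (edgeMk _ h₁) = y (edgeMk _ h₂)) :
    RealizablePoint G (glueWeights (restrictTo G V₁) (restrictTo G V₂) G (x, y)) := by
  obtain ⟨Λ₁, lam₁, hlam₁⟩ := hx
  obtain ⟨Λ₂, lam₂, hlam₂⟩ := hy
  have hpattern : lam₂ v = lam₂ w ↔ lam₁ v = lam₁ w := by
    rw [hlam₁ v w h₁, hlam₂ v w h₂] at hxy
    split_ifs at hxy <;> simp_all
  -- `φ` relabels the `V₂`-side so that it agrees with `lam₁` on `V₁ ∩ V₂ ⊆ {v, w}`.
  obtain ⟨φ, hφ, hφv, hφw⟩ := exists_injective_sum_inl hpattern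
  let L : V → Λ₁ ⊕ Λ₂ := fun u => if u ∈ V₁ then .inl (lam₁ u) else φ (lam₂ u)
  have hL₁ : ∀ u ∈ V₁, L u = .inl (lam₁ u) := fun u hu => if_pos hu
  have hL₂ : ∀ u ∈ V₂, L u = φ (lam₂ u) := by
    intro u hu₂
    by_cases hu₁ : u ∈ V₁
    · rcases hmeet ⟨hu₁, hu₂⟩ with rfl | rfl
      · rw [hL₁ u hu₁, hφv]
      · rw [hL₁ u hu₁, hφw]
    · exact if_neg hu₁
  refine ⟨Λ₁ ⊕ Λ₂, L, fun a b hab => ?_⟩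
  by_cases hab₁ : (restrictTo G V₁).Adj a b
  · rw [glueWeights_apply_edgeMk_of_adj_left _ _ hab hab₁, hlam₁ a b hab₁, hL₁ a hab₁.2.1,
      hL₁ b hab₁.2.2, Sum.inl_injective.eq_iff]
  · have hab₂ : (restrictTo G V₂).Adj a b :=
      ⟨hab, ((hedges a b hab).resolve_left fun h => hab₁ ⟨hab, h⟩)⟩
    rw [glueWeights_apply_edgeMk_of_adj_right _ _ hab hab₁ hab₂, hlam₂ a b hab₂, hL₂ a hab₂.2.1,
      hL₂ b hab₂.2.2, hφ.eq_iff]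

theorem stmt6_general (G : SimpleGraph V) (V₁ V₂ : Set V) (v w : V)
    (hmeet : V₁ ∩ V₂ = {v, w}) (hvw : G.Adj v w)
    (hedges : ∀ x y, G.Adj x y → (x ∈ V₁ ∧ y ∈ V₁) ∨ (x ∈ V₂ ∧ y ∈ V₂))
    (r : G.edgeSet → ℝ) :
    r ∈ classicalPolytope G ↔
      (restrictWeights (restrictTo_le G V₁) r ∈ classicalPolytope (restrictTo G V₁) ∧
       restrictWeights (restrictTo_le G V₂) r ∈ classicalPolytope (restrictTo G V₂)) := by
  have hv : v ∈ V₁ ∩ V₂ := hmeet ▸ Set.mem_insert v {w}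
  have hw : w ∈ V₁ ∩ V₂ := hmeet ▸ Set.mem_insert_of_mem v rfl
  have h₁ : (restrictTo G V₁).Adj v w := ⟨hvw, hv.1, hw.1⟩
  have h₂ : (restrictTo G V₂).Adj v w := ⟨hvw, hv.2, hw.2⟩
  refine ⟨fun hr => ⟨restrictWeights_mem_classicalPolytope _ hr,
    restrictWeights_mem_classicalPolytope _ hr⟩, fun ⟨hr₁, hr₂⟩ => ?_⟩
  have hpair := prodMk_mem_convexHull_of_apply_eq (f₁ := LinearMap.proj (edgeMk _ h₁))
    (f₂ := LinearMap.proj (edgeMk _ h₂)) (fun x hx => hx.apply_edgeMk_eq_zero_or_one h₁)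
    (fun y hy => hy.apply_edgeMk_eq_zero_or_one h₂) hr₁ hr₂ rfl
  have hglue := LinearMap.image_convexHull (glueWeights _ _ G) _ ▸ Set.mem_image_of_mem _ hpair
  have hcover : ∀ a b, G.Adj a b → (restrictTo G V₁).Adj a b ∨ (restrictTo G V₂).Adj a b :=
    fun a b hab => (hedges a b hab).imp (⟨hab, ·⟩) (⟨hab, ·⟩)
  rw [glueWeights_restrictWeights _ _ hcover] at hglue
  refine convexHull_mono ?_ hglue
  rintro _ ⟨⟨x, y⟩, ⟨hx, hy, hxy⟩, rfl⟩
  exact hx.glueWeights hmeet.subset hedges h₁ h₂ hy hxy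

/-- If `G` is the gluing of its induced subgraphs `G₁` on `V₁` and `G₂` on `V₂` along an
edge `{v,w}` (i.e. `V₁ ∩ V₂ = {v, w}`, `{v,w} ∈ E(G)`, and every edge lies within `V₁` or
within `V₂`), then an edge weighting `r ∈ [0,1]^{E(G)}` lies in `C_G` iff its restriction
to `E(G₁)` lies in `C_{G₁}` and its restriction to `E(G₂)` lies in `C_{G₂}`. -/
theorem stmt6 [Fintype V] (G : SimpleGraph V) (V₁ V₂ : Set V) (v w : V)
    (hcover : V₁ ∪ V₂ = Set.univ) (hmeet : V₁ ∩ V₂ = {v, w}) (hvw : G.Adj v w)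
    (hedges : ∀ x y, G.Adj x y → (x ∈ V₁ ∧ y ∈ V₁) ∨ (x ∈ V₂ ∧ y ∈ V₂))
    (r : G.edgeSet → ℝ) (hr01 : ∀ e, r e ∈ Set.Icc (0 : ℝ) 1) :
    r ∈ classicalPolytope G ↔
      (restrictWeights (restrictTo_le G V₁) r ∈ classicalPolytope (restrictTo G V₁) ∧
       restrictWeights (restrictTo_le G V₂) r ∈ classicalPolytope (restrictTo G V₂)) :=
  stmt6_general G V₁ V₂ v w hmeet hvw hedges r
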